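/- arXiv:1001.3800 — 2 statements merged into one kernel-verified Lean document; each statement's English description precedes it below -/
import Mathlib

section
/- The square norm of ∇φ equals ‖∇φ‖² = −8(μ₁² − μ₂²). -/
noncomputable section

/-- The underlying 5-dimensional real vector space. -/
abbrev V : Type := Fin 5 → ℝ

/-- The basis `E₁,…,E₅` (0-indexed: `E 0 = E₁`, …, `E 4 = E₅`). -/
def E (i : Fin 5) : V := Pi.single i 1

/-- `ξ = E₅`. -/
def xiV : V := E 4

/-- The almost contact endomorphism `φ`. -/
def phiV (x : V) : V := ![-x 2, -x 3, x 0, x 1, 0]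

/-- The contact form `η`. -/
def etaF (x : V) : ℝ := x 4

/-- The B-metric `g`. -/
def gB (x y : V) : ℝ := x 0 * y 0 + x 1 * y 1 - x 2 * y 2 - x 3 * y 3 + x 4 * y 4

/-- The signs `εᵢ = g(Eᵢ,Eᵢ)`. -/
def eps : Fin 5 → ℝ := ![1, 1, -1, -1, 1]

/-- The Lie bracket: the unique skew-symmetric bilinear bracket whose only nonzero
basis brackets are `[E₁,E₂] = -[E₃,E₄] = -λ₁E₁ - λ₂E₂ + λ₃E₃ + λ₄E₄ + 2μ₁E₅` and
`[E₁,E₄] = -[E₂,E₃] = -λ₃E₁ - λ₄E₂ - λ₁E₃ - λ₂E₄ + 2μ₂E₅`. -/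
def brkt (l1 l2 l3 l4 m1 m2 : ℝ) (x y : V) : V :=
  (x 0 * y 1 - x 1 * y 0 - x 2 * y 3 + x 3 * y 2) •
    (![-l1, -l2, l3, l4, 2 * m1] : V) +
  (x 0 * y 3 - x 3 * y 0 - x 1 * y 2 + x 2 * y 1) •
    (![-l3, -l4, -l1, -l2, 2 * m2] : V)

/-- The torsion `T(x,y) = 2(η(x)∇_yξ − η(y)∇_xξ + g(∇_xξ,y)ξ)`. -/
def Tors (nabla : V → V → V) (x y : V) : V :=
  (2 : ℝ) • (etaF x • nabla y xiV - etaF y • nabla x xiV + gB (nabla x xiV) y • xiV)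

/-- The φKT-connection `D_x y = ∇_x y + (1/2)T(x,y)`. -/
def Dconn (nabla : V → V → V) (x y : V) : V :=
  nabla x y + (1 / 2 : ℝ) • Tors nabla x y

/-- Curvature of a connection: `∇_x∇_y z − ∇_y∇_x z − ∇_{[x,y]}z`. -/
def curv (br conn : V → V → V) (x y z : V) : V :=
  conn x (conn y z) - conn y (conn x z) - conn (br x y) z

/-- Curvature (0,4)-tensor. -/
def curv4 (br conn : V → V → V) (x y z w : V) : ℝ := gB (curv br conn x y z) w

/-- Ricci tensor. -/
def ricci (br conn : V → V → V) (y z : V) : ℝ :=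
  ∑ i : Fin 5, eps i * curv4 br conn (E i) y z (E i)

/-- Scalar curvature. -/
def scal (br conn : V → V → V) : ℝ :=
  ∑ i : Fin 5, ∑ j : Fin 5, eps i * eps j * curv4 br conn (E i) (E j) (E j) (E i)

/-- `(∇_xφ)y = ∇_x(φy) − φ(∇_x y)`. -/
def nphi (nabla : V → V → V) (x y : V) : V := nabla x (phiV y) - phiV (nabla x y)

/-- The square norm `‖∇φ‖²`. -/
def sqnormNphi (nabla : V → V → V) : ℝ :=
  ∑ i : Fin 5, ∑ k : Fin 5,
    eps i * eps k * gB (nphi nabla (E i) (E k)) (nphi nabla (E i) (E k))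

/-! The Koszul formula determines `∇`, and a direct computation gives
`(∇_xφ)y = η(y) A x + g(A x, y) ξ` with `A = -φ ∘ ∇ξ` horizontal and depending only on `μ₁, μ₂`.
Summing over an orthonormal basis, both terms contribute `Σᵢ εᵢ g(A Eᵢ, A Eᵢ) = 4(μ₂² − μ₁²)`. -/

lemma gB_E_right (v : V) (j : Fin 5) : gB v (E j) = eps j * v j := by
  fin_cases j <;> simp [gB, E, eps]

lemma eps_mul_self (j : Fin 5) : eps j * eps j = 1 := by
  fin_cases j <;> simp [eps]

def IsLeviCivita (br nabla : V → V → V) : Prop :=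
  ∀ x y z : V, 2 * gB (nabla x y) z = gB (br x y) z + gB (br z x) y + gB (br z y) x

lemma apply_eq_of_isLeviCivita {br nabla : V → V → V} (hkos : IsLeviCivita br nabla)
    (x y : V) (j : Fin 5) :
    nabla x y j = eps j * (gB (br x y) (E j) + gB (br (E j) x) y + gB (br (E j) y) x) / 2 := by
  have h := hkos x y (E j)
  rw [gB_E_right] at h
  linear_combination (eps j / 2) * h - nabla x y j * eps_mul_self j

def negPhiNablaXi (m1 m2 : ℝ) (x : V) : V :=
  ![m1 * x 3 - m2 * x 1, m2 * x 0 - m1 * x 2, -(m1 * x 1 + m2 * x 3), m1 * x 0 + m2 * x 2, 0]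

lemma nphi_eq_of_isLeviCivita {l1 l2 l3 l4 m1 m2 : ℝ} {nabla : V → V → V}
    (hkos : IsLeviCivita (brkt l1 l2 l3 l4 m1 m2) nabla) (x y : V) :
    nphi nabla x y = etaF y • negPhiNablaXi m1 m2 x + gB (negPhiNablaXi m1 m2 x) y • xiV := by
  funext j
  fin_cases j <;>
    simp only [nphi, phiV, apply_eq_of_isLeviCivita hkos, negPhiNablaXi, etaF, xiV, gB, brkt, E, eps,
      Pi.add_apply, Pi.sub_apply, Pi.smul_apply, smul_eq_mul, Pi.single_apply, Matrix.cons_val,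
      Fin.reduceEq, Fin.isValue, Fin.zero_eta, Fin.mk_one, Fin.reduceFinMk, if_true, if_false] <;> ring

lemma sum_eps_mul_gB_etaF_smul_add_smul_xiV (a : V) (ha : a 4 = 0) :
    ∑ k : Fin 5, eps k * gB (etaF (E k) • a + gB a (E k) • xiV) (etaF (E k) • a + gB a (E k) • xiV)
      = 2 * gB a a := by
  simp only [Fin.sum_univ_five, gB, eps, etaF, E, xiV, ha, Pi.add_apply, Pi.smul_apply, smul_eq_mul,
    Pi.single_apply, Matrix.cons_val, Fin.reduceEq, Fin.isValue, if_true, if_false]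
  ring

theorem statement_17 (l1 l2 l3 l4 m1 m2 : ℝ)
    (nabla : V → V → V)
    (hkos : ∀ x y z : V, 2 * gB (nabla x y) z =
      gB (brkt l1 l2 l3 l4 m1 m2 x y) z + gB (brkt l1 l2 l3 l4 m1 m2 z x) y +
        gB (brkt l1 l2 l3 l4 m1 m2 z y) x) :
    sqnormNphi nabla = -8 * (m1 ^ 2 - m2 ^ 2) := by
  calc sqnormNphi nabla
      = ∑ i : Fin 5, eps i *
          (2 * gB (negPhiNablaXi m1 m2 (E i)) (negPhiNablaXi m1 m2 (E i))) := by
        refine Finset.sum_congr rfl fun i _ => ?_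
        rw [← sum_eps_mul_gB_etaF_smul_add_smul_xiV _ rfl, Finset.mul_sum]
        simp only [nphi_eq_of_isLeviCivita hkos, mul_assoc]
    _ = -8 * (m1 ^ 2 - m2 ^ 2) := by
        simp only [Fin.sum_univ_five, negPhiNablaXi, gB, eps, E, Pi.single_apply, Matrix.cons_val,
          Fin.reduceEq, Fin.isValue, if_true, if_false]
        ring
end
end

section
/- The manifold is Einsteinian, i.e. there exists c ∈ ℝ with ρ(x,y) = c·g(x,y) for all x,y ∈ V, if and only if μ₁μ₂ = −(λ₁λ₃ + λ₂λ₄) and μ₁² − μ₂² = −(1/3)(λ₁² + λ₂² − λ₃² − λ₄²). -/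
noncomputable section

/-! Since `g` is nondegenerate, the Koszul formula pins `∇` down to an explicit connection. Its
Ricci tensor has the form `ρ = a g + b g(·, φ·) + c η ⊗ η` with
`b = 4(μ₁μ₂ + λ₁λ₃ + λ₂λ₄)` and `c = 6(μ₁² − μ₂²) + 2(λ₁² + λ₂² − λ₃² − λ₄²)`, and since the three
forms are linearly independent, `ρ` is a multiple of `g` exactly when `b = c = 0`. -/

def IsKoszul (br nabla : V → V → V) : Prop :=
  ∀ x y z : V, 2 * gB (nabla x y) z = gB (br x y) z + gB (br z x) y + gB (br z y) x

lemma eq_of_forall_gB_eq {u v : V} (h : ∀ z, gB u z = gB v z) : u = v := by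
  funext j
  have hj := h (E j)
  fin_cases j <;> simpa [gB, E] using hj

lemma IsKoszul.unique {br nabla nabla' : V → V → V} (h : IsKoszul br nabla)
    (h' : IsKoszul br nabla') : nabla = nabla' := by
  funext x y
  refine eq_of_forall_gB_eq fun z => ?_
  linarith [h x y z, h' x y z]

/-- Read off from the Koszul formula by taking `z = Eᵢ`. -/
def leviCivita (l1 l2 l3 l4 m1 m2 : ℝ) (x y : V) : V :=
  ![ m2*x 4*y 3 + m2*x 3*y 4 + m1*x 4*y 1 + m1*x 1*y 4 - l4*x 3*y 1 - l4*x 1*y 3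
      - l3*x 2*y 1 - l3*x 0*y 3 + l2*x 3*y 3 - l2*x 1*y 1 + l1*x 2*y 3 - l1*x 0*y 1,
     -m2*x 4*y 2 - m2*x 2*y 4 - m1*x 4*y 0 - m1*x 0*y 4 + l4*x 3*y 0 + l4*x 1*y 2
      + l3*x 2*y 0 + l3*x 0*y 2 - l2*x 3*y 2 + l2*x 1*y 0 - l1*x 2*y 2 + l1*x 0*y 0,
     -m2*x 4*y 1 - m2*x 1*y 4 + m1*x 4*y 3 + m1*x 3*y 4 - l4*x 3*y 3 + l4*x 1*y 1
      - l3*x 2*y 3 + l3*x 0*y 1 - l2*x 3*y 1 - l2*x 1*y 3 - l1*x 2*y 1 - l1*x 0*y 3,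
     m2*x 4*y 0 + m2*x 0*y 4 - m1*x 4*y 2 - m1*x 2*y 4 + l4*x 3*y 2 - l4*x 1*y 0
      + l3*x 2*y 2 - l3*x 0*y 0 + l2*x 3*y 0 + l2*x 1*y 2 + l1*x 2*y 0 + l1*x 0*y 2,
     -m2*x 3*y 0 + m2*x 2*y 1 - m2*x 1*y 2 + m2*x 0*y 3 + m1*x 3*y 2 - m1*x 2*y 3
      - m1*x 1*y 0 + m1*x 0*y 1 ]

lemma isKoszul_leviCivita (l1 l2 l3 l4 m1 m2 : ℝ) :
    IsKoszul (brkt l1 l2 l3 l4 m1 m2) (leviCivita l1 l2 l3 l4 m1 m2) := by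
  intro x y z
  simp only [gB, brkt, leviCivita, Pi.add_apply, Pi.smul_apply, smul_eq_mul,
    Matrix.cons_val_zero, Matrix.cons_val_one, Matrix.cons_val]
  ring

lemma ricci_leviCivita (l1 l2 l3 l4 m1 m2 : ℝ) (x y : V) :
    ricci (brkt l1 l2 l3 l4 m1 m2) (leviCivita l1 l2 l3 l4 m1 m2) x y =
      (2 * (m2 ^ 2 - m1 ^ 2) - 2 * (l1 ^ 2 + l2 ^ 2 - l3 ^ 2 - l4 ^ 2)) * gB x y
      + 4 * (m1 * m2 + l1 * l3 + l2 * l4) * gB x (phiV y)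
      + (6 * (m1 ^ 2 - m2 ^ 2) + 2 * (l1 ^ 2 + l2 ^ 2 - l3 ^ 2 - l4 ^ 2)) * (etaF x * etaF y) := by
  simp [ricci, curv4, curv, gB, leviCivita, brkt, phiV, etaF, E, eps, Fin.sum_univ_five,
    Pi.single_apply]
  ring

lemma exists_forall_eq_smul_gB_iff (a b c : ℝ) :
    (∃ k : ℝ, ∀ x y : V, a * gB x y + b * gB x (phiV y) + c * (etaF x * etaF y) = k * gB x y) ↔
      b = 0 ∧ c = 0 := by
  constructor
  · rintro ⟨k, h⟩
    have hb : b = 0 := by simpa [gB, phiV, etaF, E] using h (E 0) (E 2)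
    have ha : a = k := by simpa [gB, phiV, etaF, E] using h (E 0) (E 0)
    have hac : a + c = k := by simpa [gB, phiV, etaF, E] using h (E 4) (E 4)
    exact ⟨hb, by linarith⟩
  · rintro ⟨rfl, rfl⟩
    exact ⟨a, fun x y => by ring⟩

theorem statement_19 (l1 l2 l3 l4 m1 m2 : ℝ)
    (nabla : V → V → V)
    (hkos : ∀ x y z : V, 2 * gB (nabla x y) z =
      gB (brkt l1 l2 l3 l4 m1 m2 x y) z + gB (brkt l1 l2 l3 l4 m1 m2 z x) y +
        gB (brkt l1 l2 l3 l4 m1 m2 z y) x) :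
    (∃ c : ℝ, ∀ x y : V, ricci (brkt l1 l2 l3 l4 m1 m2) nabla x y = c * gB x y) ↔
      (m1 * m2 = -(l1 * l3 + l2 * l4) ∧
        m1 ^ 2 - m2 ^ 2 = -(1 / 3) * (l1 ^ 2 + l2 ^ 2 - l3 ^ 2 - l4 ^ 2)) := by
  obtain rfl : nabla = leviCivita l1 l2 l3 l4 m1 m2 :=
    IsKoszul.unique hkos (isKoszul_leviCivita l1 l2 l3 l4 m1 m2)
  simp only [ricci_leviCivita, exists_forall_eq_smul_gB_iff]
  constructor
  · rintro ⟨hb, hc⟩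
    constructor <;> linarith
  · rintro ⟨h1, h2⟩
    constructor <;> linarith
end
end
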